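/- arXiv:2102.07863 — 9 statements merged into one kernel-verified Lean document; each statement's English description precedes it below -/
import Mathlib

section
/- Let Q : ℕ → ℝ, let ε ∈ (0,1), and let v ∈ ℝ. Define Q^∗(u) := sup_{n ∈ ℕ} (n·u − Q(n)) and K(ε) := Σ_{n=0}^∞ exp(−ε·Q(n)). Suppose K(ε) < ∞ and Q^∗(v/(1−ε)) < ∞. Then Σ_{n=0}^∞ exp(n·v − Q(n)) ≤ K(ε) · exp((1−ε)·Q^∗(v/(1−ε))). -/
/-- Proposition 2.2, K-form: for `Q : ℕ → ℝ`, `ε ∈ (0,1)` and `v ∈ ℝ`, if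
`K(ε) = Σ_n exp(-ε·Q(n)) < ∞` and the discrete conjugate
`Q*(v/(1-ε)) = sup_n (n·(v/(1-ε)) - Q(n))` is finite, then
`Σ_n exp(n·v - Q(n)) ≤ K(ε) · exp((1-ε)·Q*(v/(1-ε)))`.
(Sums are taken in the extended nonnegative reals.) -/
theorem series_bound_K_form
    (Q : ℕ → ℝ) (ε v : ℝ) (hε : ε ∈ Set.Ioo (0 : ℝ) 1)
    (hK : (∑' n : ℕ, ENNReal.ofReal (Real.exp (-ε * Q n))) ≠ ⊤)
    (hQs : BddAbove (Set.range fun n : ℕ => (n : ℝ) * (v / (1 - ε)) - Q n)) :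
    (∑' n : ℕ, ENNReal.ofReal (Real.exp ((n : ℝ) * v - Q n)))
      ≤ (∑' n : ℕ, ENNReal.ofReal (Real.exp (-ε * Q n))) *
        ENNReal.ofReal (Real.exp ((1 - ε) *
          sSup (Set.range fun n : ℕ => (n : ℝ) * (v / (1 - ε)) - Q n))) := by
  obtain ⟨hε0, hε1⟩ := hε
  have h1 : (0:ℝ) < 1 - ε := by linarith
  set S := sSup (Set.range fun n : ℕ => (n : ℝ) * (v / (1 - ε)) - Q n) with hS
  rw [← ENNReal.tsum_mul_right]
  apply ENNReal.tsum_le_tsum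
  intro n
  rw [← ENNReal.ofReal_mul (Real.exp_nonneg _), ← Real.exp_add]
  apply ENNReal.ofReal_le_ofReal
  apply Real.exp_le_exp.mpr
  have hle : (n : ℝ) * (v / (1 - ε)) - Q n ≤ S :=
    le_csSup hQs ⟨n, rfl⟩
  have : (n : ℝ) * v - Q n = -ε * Q n + (1 - ε) * ((n : ℝ) * (v / (1 - ε)) - Q n) := by
    field_simp
    ring
  rw [this]
  have := mul_le_mul_of_nonneg_left hle h1.le
  linarith
end

section
/- Let Q : ℝ → ℝ, let ε ∈ (0,1), and let v ∈ ℝ. Define Q*(u) := sup_{x ≥ 0} (x·u − Q(x)), Q**(w) := sup_{u ∈ ℝ} (w·u − Q*(u)), and U(ε) := Σ_{n=0}^∞ exp(Q*((1−ε)·n) − Q(n)). Suppose U(ε) < ∞ and that Q*((1−ε)·n) is finite for every n ∈ ℕ and Q**(v/(1−ε)) is finite. Then Σ_{n=0}^∞ exp(n·v − Q(n)) ≤ U(ε) · exp(Q**(v/(1−ε))). -/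
/-- Proposition 2.2, U-form: for `Q : ℝ → ℝ`, `ε ∈ (0,1)`, `v ∈ ℝ`, with conjugate
`Q*(u) = sup_{x ≥ 0} (x·u - Q(x))` and biconjugate `Q**(w) = sup_u (w·u - Q*(u))`
(taken in the extended reals), if `U(ε) = Σ_n exp(Q*((1-ε)·n) - Q(n)) < ∞`,
`Q*((1-ε)·n)` is finite (equal to the real `a n`) for every `n`, and
`Q**(v/(1-ε))` is finite (equal to the real `b`), then
`Σ_n exp(n·v - Q(n)) ≤ U(ε) · exp(Q**(v/(1-ε)))`. -/
theorem series_bound_U_form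
    (Q : ℝ → ℝ) (ε v : ℝ) (hε : ε ∈ Set.Ioo (0 : ℝ) 1)
    (Qstar : ℝ → EReal)
    (hQstar : ∀ u : ℝ,
      Qstar u = ⨆ x : {x : ℝ // 0 ≤ x}, (((x : ℝ) * u - Q x : ℝ) : EReal))
    (Qss : ℝ → EReal)
    (hQss : ∀ w : ℝ, Qss w = ⨆ u : ℝ, (((w * u : ℝ) : EReal) - Qstar u))
    (a : ℕ → ℝ) (ha : ∀ n : ℕ, Qstar ((1 - ε) * (n : ℝ)) = (a n : EReal))
    (b : ℝ) (hb : Qss (v / (1 - ε)) = (b : EReal))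
    (hU : (∑' n : ℕ, ENNReal.ofReal (Real.exp (a n - Q (n : ℝ)))) ≠ ⊤) :
    (∑' n : ℕ, ENNReal.ofReal (Real.exp ((n : ℝ) * v - Q (n : ℝ))))
      ≤ (∑' n : ℕ, ENNReal.ofReal (Real.exp (a n - Q (n : ℝ)))) *
        ENNReal.ofReal (Real.exp b) := by
  have hne : (1 - ε) ≠ 0 := by have := hε.2; linarith
  -- key pointwise bound: n*v ≤ a n + b
  have key : ∀ n : ℕ, (n : ℝ) * v ≤ a n + b := by
    intro n
    have h1 : (((v / (1 - ε)) * ((1 - ε) * n) : ℝ) : EReal)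
        - Qstar ((1 - ε) * n) ≤ Qss (v / (1 - ε)) := by
      rw [hQss]
      exact le_iSup (fun u : ℝ => (((v / (1 - ε)) * u : ℝ) : EReal) - Qstar u)
        ((1 - ε) * n)
    rw [ha, hb] at h1
    have hprod : (v / (1 - ε)) * ((1 - ε) * n) = (n : ℝ) * v := by
      field_simp
    rw [hprod] at h1
    have h2 : (((n : ℝ) * v - a n : ℝ) : EReal) ≤ (b : EReal) := by
      rw [EReal.coe_sub] at *
      exact h1
    have := EReal.coe_le_coe_iff.mp h2
    linarith
  calc (∑' n : ℕ, ENNReal.ofReal (Real.exp ((n : ℝ) * v - Q (n : ℝ))))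
      ≤ ∑' n : ℕ, ENNReal.ofReal (Real.exp (a n - Q (n : ℝ))) *
          ENNReal.ofReal (Real.exp b) := by
        apply ENNReal.tsum_le_tsum
        intro n
        rw [← ENNReal.ofReal_mul (Real.exp_nonneg _), ← Real.exp_add]
        · exact ENNReal.ofReal_le_ofReal (Real.exp_le_exp.2 (by linarith [key n]))
    _ = (∑' n : ℕ, ENNReal.ofReal (Real.exp (a n - Q (n : ℝ)))) *
          ENNReal.ofReal (Real.exp b) := ENNReal.tsum_mul_right
end

section
/- Let f : ℂ → ℂ be an entire function with Taylor coefficients c_n, let Q : ℕ → ℝ satisfy |c_n| ≤ exp(−Q(n)) for all n ∈ ℕ, and suppose there exists ε₀ ∈ (0,1) such that K(ε₀) := Σ_{n=0}^∞ exp(−ε₀·Q(n)) < ∞. Then for every r ≥ 1 such that Q^∗((log r)/(1−ε₀)) < ∞, where Q^∗(u) := sup_{n ∈ ℕ} (n·u − Q(n)), one has M_f(r) ≤ K(ε₀) · exp((1−ε₀) · Q^∗((log r)/(1−ε₀))). -/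
/-!
Write `θ = 1 - ε₀`. Each term of the Taylor series on `|z| = r` splits as
`exp (-Q n) rⁿ = exp (-ε₀ Q n) · exp (θ (n log r / θ - Q n))`, and the second factor is at most
`exp (θ Q*(log r / θ))`. Summing the first factors gives `K(ε₀)`.
-/

open Real Set

noncomputable section

def maxModulus {E : Type*} [Norm E] (f : ℂ → E) (r : ℝ) : ℝ :=
  sSup {x : ℝ | ∃ z : ℂ, ‖z‖ = r ∧ x = ‖f z‖}

def discreteConjugate (Q : ℕ → ℝ) (u : ℝ) : ℝ :=
  sSup (range fun n : ℕ => (n : ℝ) * u - Q n)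

end

theorem maxModulus_le {E : Type*} [Norm E] {f : ℂ → E} {r B : ℝ} (hB : 0 ≤ B)
    (h : ∀ z : ℂ, ‖z‖ = r → ‖f z‖ ≤ B) : maxModulus f r ≤ B :=
  Real.sSup_le (by rintro x ⟨z, hz, rfl⟩; exact h z hz) hB

theorem le_discreteConjugate {Q : ℕ → ℝ} {u : ℝ}
    (hQ : BddAbove (range fun n : ℕ => (n : ℝ) * u - Q n)) (n : ℕ) :
    (n : ℝ) * u - Q n ≤ discreteConjugate Q u :=
  le_csSup hQ ⟨n, rfl⟩

theorem exp_neg_mul_pow_eq {r ε : ℝ} (hr : 0 < r) (hε : ε ≠ 1) (n : ℕ) (q : ℝ) :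
    exp (-q) * r ^ n = exp (-ε * q) * exp ((1 - ε) * (n * (log r / (1 - ε)) - q)) := by
  have hθ : 1 - ε ≠ 0 := sub_ne_zero.mpr hε.symm
  rw [← exp_log (pow_pos hr n), log_pow, ← exp_add, ← exp_add]
  congr 1
  field_simp
  ring

theorem exp_neg_mul_pow_le_discreteConjugate {Q : ℕ → ℝ} {r ε : ℝ} (hr : 0 < r) (hε : ε < 1)
    (hQ : BddAbove (range fun n : ℕ => (n : ℝ) * (log r / (1 - ε)) - Q n)) (n : ℕ) :
    exp (-Q n) * r ^ n
      ≤ exp (-ε * Q n) * exp ((1 - ε) * discreteConjugate Q (log r / (1 - ε))) := by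
  rw [exp_neg_mul_pow_eq hr hε.ne]
  gcongr
  exact le_discreteConjugate hQ n

/-- Proposition 2.3: if `f` is entire with Taylor coefficients `c` satisfying
`|c_n| ≤ exp(-Q(n))`, and `K(ε₀) = Σ_n exp(-ε₀·Q(n)) < ∞` for some `ε₀ ∈ (0,1)`,
then for every `r ≥ 1` for which the discrete conjugate
`Q*((log r)/(1-ε₀)) = sup_n (n·(log r)/(1-ε₀) - Q(n))` is finite, the maximal
function satisfies `M_f(r) ≤ K(ε₀) · exp((1-ε₀)·Q*((log r)/(1-ε₀)))`. -/
theorem maximal_function_upper_estimate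
    (f : ℂ → ℂ) (c : ℕ → ℂ)
    (hf : ∀ z : ℂ, HasSum (fun n : ℕ => c n * z ^ n) (f z))
    (Q : ℕ → ℝ)
    (hc : ∀ n : ℕ, ‖c n‖ ≤ Real.exp (-Q n))
    (ε₀ : ℝ) (hε₀ : ε₀ ∈ Set.Ioo (0 : ℝ) 1)
    (hK : Summable fun n : ℕ => Real.exp (-ε₀ * Q n)) :
    ∀ r : ℝ, 1 ≤ r →
      BddAbove (Set.range fun n : ℕ => (n : ℝ) * (Real.log r / (1 - ε₀)) - Q n) →
      sSup {x : ℝ | ∃ z : ℂ, ‖z‖ = r ∧ x = ‖f z‖}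
        ≤ (∑' n : ℕ, Real.exp (-ε₀ * Q n)) *
          Real.exp ((1 - ε₀) *
            sSup (Set.range fun n : ℕ => (n : ℝ) * (Real.log r / (1 - ε₀)) - Q n)) := by
  intro r hr hQ
  have hr0 : 0 < r := by linarith
  change maxModulus f r
    ≤ (∑' n, exp (-ε₀ * Q n)) * exp ((1 - ε₀) * discreteConjugate Q (log r / (1 - ε₀)))
  refine maxModulus_le (by positivity) fun z hz => ?_
  rw [← tsum_mul_right]
  refine (hf z).norm_le_of_bounded (hK.mul_right _).hasSum fun n => ?_
  calc ‖c n * z ^ n‖ = ‖c n‖ * r ^ n := by rw [norm_mul, norm_pow, hz]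
    _ ≤ exp (-Q n) * r ^ n := by gcongr; exact hc n
    _ ≤ _ := exp_neg_mul_pow_le_discreteConjugate hr0 hε₀.2 hQ n
end

section
/- Let Λ : ℝ → ℝ be a nonnegative, convex, continuous function whose Young–Fenchel conjugate Λ*(y) := sup_{v ∈ ℝ} (y·v − Λ(v)) is finite at every natural number. Let f : ℂ → ℂ be an entire function with Taylor coefficients c_n satisfying |c_n| ≤ exp(−Λ*(n)) for all n ∈ ℕ, and suppose there exists ε₀ ∈ (0,1) such that S₀ := Σ_{n=0}^∞ exp(−ε₀·Λ*(n)) < ∞. Then for every r ≥ 1, M_f(r) ≤ S₀ · exp(Λ((log r)/(1−ε₀))). -/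
/-!
Fenchel–Young at the point `v = log r / (1 - ε₀)` gives
`n log r = (1 - ε₀) n v ≤ (1 - ε₀) (Λ*(n) + Λ(v))`, and since `Λ(v) ≥ 0` the factor `1 - ε₀`
may be dropped in front of `Λ(v)`. Hence `|c_n| rⁿ ≤ exp(-ε₀ Λ*(n)) exp(Λ(v))` for every `n`,
and summing over `n` bounds `|f|` on the circle of radius `r`.
-/

open Real Set

noncomputable def fenchelConjugate (Λ : ℝ → ℝ) (y : ℝ) : ℝ :=
  sSup (range fun v : ℝ => y * v - Λ v)

theorem mul_sub_le_fenchelConjugate {Λ : ℝ → ℝ} {y : ℝ}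
    (hbdd : BddAbove (range fun v : ℝ => y * v - Λ v)) (v : ℝ) :
    y * v - Λ v ≤ fenchelConjugate Λ y :=
  le_csSup hbdd ⟨v, rfl⟩

theorem exp_neg_mul_pow_le_of_mul_sub_le {Λ : ℝ → ℝ} {L ε r : ℝ} {n : ℕ}
    (hε0 : 0 ≤ ε) (hε1 : ε < 1) (hr : 0 < r) (hΛ : 0 ≤ Λ (log r / (1 - ε)))
    (hL : n * (log r / (1 - ε)) - Λ (log r / (1 - ε)) ≤ L) :
    exp (-L) * r ^ n ≤ exp (-ε * L) * exp (Λ (log r / (1 - ε))) := by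
  set v := log r / (1 - ε)
  have hlog : n * log r = (1 - ε) * (n * v) := by
    have : 1 - ε ≠ 0 := sub_ne_zero.2 hε1.ne'
    simp only [v]; field_simp
  have hyoung : n * log r ≤ (1 - ε) * L + Λ v := by
    rw [hlog]
    linarith [mul_le_mul_of_nonneg_left hL (sub_nonneg.2 hε1.le), mul_nonneg hε0 hΛ]
  rw [← exp_log (pow_pos hr n), log_pow, ← exp_add, ← exp_add, exp_le_exp]
  linarith

theorem maximal_function_bound_from_conjugate_decay_general
    (Λ : ℝ → ℝ)
    (hΛ0 : ∀ v : ℝ, 0 ≤ Λ v)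
    (hbdd : ∀ n : ℕ, BddAbove (Set.range fun v : ℝ => (n : ℝ) * v - Λ v))
    (f : ℂ → ℂ) (c : ℕ → ℂ)
    (hf : ∀ z : ℂ, HasSum (fun n : ℕ => c n * z ^ n) (f z))
    (hc : ∀ n : ℕ, ‖c n‖
      ≤ Real.exp (-(sSup (Set.range fun v : ℝ => (n : ℝ) * v - Λ v))))
    (ε₀ : ℝ) (hε₀ : ε₀ ∈ Set.Ioo (0 : ℝ) 1)
    (hS : Summable fun n : ℕ =>
      Real.exp (-ε₀ * sSup (Set.range fun v : ℝ => (n : ℝ) * v - Λ v))) :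
    ∀ r : ℝ, 1 ≤ r →
      sSup {x : ℝ | ∃ z : ℂ, ‖z‖ = r ∧ x = ‖f z‖}
        ≤ (∑' n : ℕ, Real.exp (-ε₀ * sSup (Set.range fun v : ℝ => (n : ℝ) * v - Λ v))) *
          Real.exp (Λ (Real.log r / (1 - ε₀))) := by
  intro r hr
  refine Real.sSup_le ?_ (by positivity)
  rintro _ ⟨z, rfl, rfl⟩
  refine (hf z).norm_le_of_bounded (hS.hasSum.mul_right _) fun n => ?_
  calc ‖c n * z ^ n‖ = ‖c n‖ * ‖z‖ ^ n := by rw [norm_mul, norm_pow]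
    _ ≤ exp (-fenchelConjugate Λ n) * ‖z‖ ^ n := by gcongr; exact hc n
    _ ≤ exp (-ε₀ * fenchelConjugate Λ n) * exp (Λ (log ‖z‖ / (1 - ε₀))) :=
      exp_neg_mul_pow_le_of_mul_sub_le hε₀.1.le hε₀.2 (by linarith) (hΛ0 _)
        (mul_sub_le_fenchelConjugate (hbdd n) _)

/-- Summary statement (B): let `Λ` be nonnegative, convex and continuous on `ℝ`, whose
Young–Fenchel conjugate `Λ*(n) = sup_v (n·v - Λ(v))` is finite at every natural `n`.
If `f` is entire with Taylor coefficients satisfying `|c_n| ≤ exp(-Λ*(n))`, and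
`S₀ = Σ_n exp(-ε₀·Λ*(n)) < ∞` for some `ε₀ ∈ (0,1)`, then for every `r ≥ 1`,
`M_f(r) ≤ S₀ · exp(Λ((log r)/(1-ε₀)))`. -/
theorem maximal_function_bound_from_conjugate_decay
    (Λ : ℝ → ℝ)
    (hΛ0 : ∀ v : ℝ, 0 ≤ Λ v)
    (hconv : ConvexOn ℝ Set.univ Λ)
    (hcont : Continuous Λ)
    (hbdd : ∀ n : ℕ, BddAbove (Set.range fun v : ℝ => (n : ℝ) * v - Λ v))
    (f : ℂ → ℂ) (c : ℕ → ℂ)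
    (hf : ∀ z : ℂ, HasSum (fun n : ℕ => c n * z ^ n) (f z))
    (hc : ∀ n : ℕ, ‖c n‖
      ≤ Real.exp (-(sSup (Set.range fun v : ℝ => (n : ℝ) * v - Λ v))))
    (ε₀ : ℝ) (hε₀ : ε₀ ∈ Set.Ioo (0 : ℝ) 1)
    (hS : Summable fun n : ℕ =>
      Real.exp (-ε₀ * sSup (Set.range fun v : ℝ => (n : ℝ) * v - Λ v))) :
    ∀ r : ℝ, 1 ≤ r →
      sSup {x : ℝ | ∃ z : ℂ, ‖z‖ = r ∧ x = ‖f z‖}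
        ≤ (∑' n : ℕ, Real.exp (-ε₀ * sSup (Set.range fun v : ℝ => (n : ℝ) * v - Λ v))) *
          Real.exp (Λ (Real.log r / (1 - ε₀))) :=
  maximal_function_bound_from_conjugate_decay_general Λ hΛ0 hbdd f c hf hc ε₀ hε₀ hS
end

section
/- Let f : ℂ → ℂ be an entire function with Taylor coefficients c_n, let m > 1, and suppose there is a constant C > 0 such that log M_f(r) ≤ C·(log r)^m for all r ≥ 1. Then there exists a constant C' > 0 (depending only on C and m) such that |c_n| ≤ exp(−C'·n^{m/(m−1)}) for all n ≥ 1; one may take C' = (m−1)·m^{−m/(m−1)}·C^{−1/(m−1)}. -/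
/-!
Cauchy's estimate on the circle of radius `r = exp a` gives
`|c_n| ≤ M_f(r) / r ^ n ≤ exp (C * a ^ m - n * a)` for every `a ≥ 0`. Choosing `a` at the
minimum of the right-hand side, `a = (n / (m * C)) ^ (1 / (m - 1))`, turns the exponent into
`-C' * n ^ (m / (m - 1))`.
-/

open Metric Real FormalMultilinearSeries

theorem hasFPowerSeriesOnBall_ofScalars_of_forall_hasSum {f : ℂ → ℂ} {c : ℕ → ℂ}
    (hf : ∀ z, HasSum (fun n => c n * z ^ n) (f z)) :
    HasFPowerSeriesOnBall f (ofScalars ℂ c) 0 ⊤ where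
  r_le := ENNReal.le_of_forall_nnreal_lt fun r _ =>
    (ofScalars ℂ c).le_radius_of_summable_norm <| by
      simpa [ofScalars_norm, norm_mul, norm_pow] using summable_norm_iff.2 (hf r).summable
  r_pos := ENNReal.zero_lt_top
  hasSum _ := by simpa [ofScalars_apply_eq, mul_comm] using hf _

theorem differentiable_of_forall_hasSum {f : ℂ → ℂ} {c : ℕ → ℂ}
    (hf : ∀ z, HasSum (fun n => c n * z ^ n) (f z)) : Differentiable ℂ f := by
  have h := (hasFPowerSeriesOnBall_ofScalars_of_forall_hasSum hf).differentiableOn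
  rwa [eball_top, differentiableOn_univ] at h

theorem coeff_eq_iteratedDeriv_div_factorial {f : ℂ → ℂ} {c : ℕ → ℂ}
    (hf : ∀ z, HasSum (fun n => c n * z ^ n) (f z)) (n : ℕ) :
    c n = iteratedDeriv n f 0 / n.factorial := by
  have hp := (hasFPowerSeriesOnBall_ofScalars_of_forall_hasSum hf).hasFPowerSeriesAt
  have hq := ((differentiable_of_forall_hasSum hf).analyticAt 0).hasFPowerSeriesAt
  exact congrFun (ofScalars_series_injective ℂ ℂ (hp.eq_formalMultilinearSeries hq)) n

theorem norm_coeff_le_of_forall_hasSum {f : ℂ → ℂ} {c : ℕ → ℂ}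
    (hf : ∀ z, HasSum (fun n => c n * z ^ n) (f z)) {R M : ℝ} (hR : 0 < R)
    (hM : ∀ z ∈ sphere (0 : ℂ) R, ‖f z‖ ≤ M) (n : ℕ) : ‖c n‖ ≤ M / R ^ n := by
  have h := Complex.norm_iteratedDeriv_le_of_forall_mem_sphere_norm_le n hR
    (differentiable_of_forall_hasSum hf).diffContOnCl hM
  rw [coeff_eq_iteratedDeriv_div_factorial hf, norm_div, Complex.norm_natCast,
    div_le_iff₀ (by positivity)]
  calc ‖iteratedDeriv n f 0‖ ≤ n.factorial * M / R ^ n := h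
    _ = M / R ^ n * n.factorial := by ring

theorem le_exp_of_log_csSup_le {S : Set ℝ} (hS : BddAbove S) {B : ℝ}
    (h : log (sSup S) ≤ B) {x : ℝ} (hx : x ∈ S) : x ≤ exp B :=
  (le_csSup hS hx).trans ((le_exp_log _).trans (exp_le_exp.2 h))

theorem norm_le_exp_of_log_sSup_sphere_le {E F : Type*} [NormedAddCommGroup E] [ProperSpace E]
    [NormedAddCommGroup F] {f : E → F} (hf : Continuous f) {r B : ℝ}
    (h : log (sSup {x : ℝ | ∃ z : E, ‖z‖ = r ∧ x = ‖f z‖}) ≤ B) {z : E} (hz : ‖z‖ = r) :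
    ‖f z‖ ≤ exp B := by
  refine le_exp_of_log_csSup_le ?_ h ⟨z, hz, rfl⟩
  have hbdd := (isCompact_sphere (0 : E) r).bddAbove_image (continuous_norm.comp hf).continuousOn
  refine hbdd.mono ?_
  rintro _ ⟨w, hw, rfl⟩
  exact ⟨w, by simpa using hw, rfl⟩

theorem exists_nonneg_mul_rpow_sub_mul_eq {C m t : ℝ} (hC : 0 < C) (hm : 1 < m) (ht : 0 < t) :
    ∃ a, 0 ≤ a ∧ C * a ^ m - t * a =
      -((m - 1) * m ^ (-(m / (m - 1))) * C ^ (-(1 / (m - 1))) * t ^ (m / (m - 1))) := by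
  have hm0 : 0 < m := by linarith
  have hm1 : m - 1 ≠ 0 := by linarith
  -- the critical point of `a ↦ C * a ^ m - t * a`, where `m * C * a ^ (m - 1) = t`
  set a := (t / (m * C)) ^ (1 / (m - 1)) with ha_def
  have ha : 0 < a := by positivity
  have hpow : a ^ (m - 1) = t / (m * C) := by
    rw [ha_def, ← rpow_mul (by positivity), one_div_mul_cancel hm1, rpow_one]
  have hcrit : a ^ m = a * (t / (m * C)) := by
    rw [← hpow, rpow_sub_one ha.ne']
    field_simp
  have hconj : m / (m - 1) = 1 + 1 / (m - 1) := by field_simp; ring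
  refine ⟨a, ha.le, ?_⟩
  rw [hcrit, ha_def, div_rpow ht.le (by positivity), mul_rpow hm0.le hC.le, hconj, neg_add,
    rpow_add hm0, rpow_add ht, rpow_neg hm0.le, rpow_neg hm0.le, rpow_neg hC.le, rpow_one, rpow_one]
  field_simp
  ring

/-- Example 3.1, forward direction: if `f` is entire, `m > 1`, and
`log M_f(r) ≤ C·(log r)^m` for all `r ≥ 1`, then
`|c_n| ≤ exp(-C'·n^{m/(m-1)})` for all `n ≥ 1`, with the explicit constant
`C' = (m-1)·m^{-m/(m-1)}·C^{-1/(m-1)} > 0`. -/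
theorem coefficient_decay_from_logpower_growth
    (f : ℂ → ℂ) (c : ℕ → ℂ)
    (hf : ∀ z : ℂ, HasSum (fun n : ℕ => c n * z ^ n) (f z))
    (C m : ℝ) (hC : 0 < C) (hm : 1 < m)
    (hgrow : ∀ r : ℝ, 1 ≤ r →
      Real.log (sSup {x : ℝ | ∃ z : ℂ, ‖z‖ = r ∧ x = ‖f z‖})
        ≤ C * Real.log r ^ m) :
    ∀ n : ℕ, 1 ≤ n →
      ‖c n‖
        ≤ Real.exp (-((m - 1) * m ^ (-(m / (m - 1))) * C ^ (-(1 / (m - 1))) *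
            (n : ℝ) ^ (m / (m - 1)))) := by
  intro n hn
  obtain ⟨a, ha, hexp⟩ := exists_nonneg_mul_rpow_sub_mul_eq hC hm (t := n) (by exact_mod_cast hn)
  have hM : ∀ z ∈ sphere (0 : ℂ) (exp a), ‖f z‖ ≤ exp (C * a ^ m) := fun z hz => by
    simpa using norm_le_exp_of_log_sSup_sphere_le (differentiable_of_forall_hasSum hf).continuous
      (hgrow _ (one_le_exp ha)) (mem_sphere_zero_iff_norm.1 hz)
  calc ‖c n‖ ≤ exp (C * a ^ m) / exp a ^ n := norm_coeff_le_of_forall_hasSum hf (exp_pos a) hM n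
    _ = exp (C * a ^ m - n * a) := by rw [← exp_nat_mul, ← exp_sub]
    _ = _ := by rw [hexp]
end

section
/- Let f : ℂ → ℂ be an entire function with Taylor coefficients c_n, let m > 1 and m' := m/(m−1), and suppose there is a constant C' > 0 such that |c_n| ≤ exp(−C'·n^{m'}) for all n ≥ 0. Then there exists a constant C > 0 (depending only on C' and m) such that log M_f(r) ≤ C·(log r)^m for all r ≥ e. -/
/-!
Weighted Young's inequality gives `n s ≤ K s^m + C' n^{m'}`. Taking `s = log r + 1`, the decay of
the coefficients turns this into `|c_n| r^n ≤ exp (K s^m) e^{-n}`, so summing the geometric series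
bounds `M_f(r)` by `exp (K s^m + 1)`, and `s ≤ 2 log r` for `r ≥ e`.
-/

open Real

theorem Real.HolderConjugate.exists_forall_mul_le_mul_rpow_add_mul_rpow {p q : ℝ}
    (hpq : p.HolderConjugate q) {ε : ℝ} (hε : 0 < ε) :
    ∃ K > 0, ∀ x s : ℝ, 0 ≤ x → 0 ≤ s → x * s ≤ K * s ^ p + ε * x ^ q := by
  have hp := hpq.pos
  have hq := hpq.symm.pos
  -- rescale by `λ` with `λ ^ q / q = ε`
  set lam : ℝ := (ε * q) ^ q⁻¹
  have hlam : 0 < lam := by positivity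
  have hlam_pow : lam ^ q = ε * q := by
    rw [← rpow_mul (by positivity), inv_mul_cancel₀ hq.ne', rpow_one]
  refine ⟨lam⁻¹ ^ p / p, by positivity, fun x s hx hs => ?_⟩
  have h := young_inequality_of_nonneg (by positivity : 0 ≤ lam⁻¹ * s)
    (by positivity : 0 ≤ lam * x) hpq
  rw [mul_rpow (by positivity) hs, mul_rpow hlam.le hx, hlam_pow] at h
  calc x * s = lam⁻¹ * s * (lam * x) := by field_simp
    _ ≤ _ := h
    _ = lam⁻¹ ^ p / p * s ^ p + ε * x ^ q := by field_simp

theorem mul_pow_le_exp_mul_exp_neg_one_pow {a r ε L q : ℝ} {n : ℕ}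
    (ha : a ≤ exp (-(ε * (n : ℝ) ^ q))) (hr : 0 < r)
    (hn : n * (log r + 1) ≤ L + ε * (n : ℝ) ^ q) :
    a * r ^ n ≤ exp L * exp (-1) ^ n := by
  calc a * r ^ n ≤ exp (-(ε * (n : ℝ) ^ q)) * exp (log r) ^ n := by
        rw [exp_log hr]; gcongr
    _ = exp (-(ε * (n : ℝ) ^ q) + n * log r) := by rw [← exp_nat_mul, ← exp_add]
    _ ≤ exp (L + n * (-1)) := exp_le_exp.2 (by linarith)
    _ = exp L * exp (-1) ^ n := by rw [exp_add, exp_nat_mul]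

theorem norm_le_exp_add_one_of_hasSum {c : ℕ → ℂ} {z w : ℂ} {L : ℝ}
    (hw : HasSum (fun n => c n * z ^ n) w)
    (hc : ∀ n, ‖c n‖ * ‖z‖ ^ n ≤ exp L * exp (-1) ^ n) :
    ‖w‖ ≤ exp (L + 1) := by
  have hq : exp (-1) < 1 := exp_lt_one_iff.2 (by norm_num)
  have hgeom := (hasSum_geometric_of_lt_one (exp_pos _).le hq).mul_left (exp L)
  have hle : ‖w‖ ≤ exp L * (1 - exp (-1))⁻¹ :=
    hw.norm_le_of_bounded hgeom fun n => by simpa only [norm_mul, norm_pow] using hc n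
  have h2 : (1 - exp (-1))⁻¹ ≤ exp 1 := by
    have hmul : exp 1 * exp (-1) = 1 := by rw [← exp_add, add_neg_cancel, exp_zero]
    rw [inv_le_iff_one_le_mul₀ (by linarith)]
    nlinarith [add_one_le_exp 1]
  calc ‖w‖ ≤ exp L * exp 1 := hle.trans (by gcongr)
    _ = exp (L + 1) := (exp_add L 1).symm

theorem log_sSup_norm_sphere_le {f : ℂ → ℂ} {r L : ℝ} (hr : 0 ≤ r) (hL : 0 ≤ L)
    (hf : ∀ z : ℂ, ‖z‖ = r → ‖f z‖ ≤ exp L) :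
    log (sSup {x : ℝ | ∃ z : ℂ, ‖z‖ = r ∧ x = ‖f z‖}) ≤ L := by
  set S := {x : ℝ | ∃ z : ℂ, ‖z‖ = r ∧ x = ‖f z‖}
  have hmem : ‖f r‖ ∈ S := ⟨r, by simp [abs_of_nonneg hr], rfl⟩
  have hbdd : ∀ x ∈ S, x ≤ exp L := by rintro x ⟨z, hz, rfl⟩; exact hf z hz
  have hnonneg : 0 ≤ sSup S := (norm_nonneg _).trans (le_csSup ⟨_, hbdd⟩ hmem)
  rcases hnonneg.eq_or_lt with h | h
  · rw [← h, log_zero]; exact hL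
  · exact (log_le_iff_le_exp h).2 (csSup_le ⟨_, hmem⟩ hbdd)

theorem add_one_rpow_le_two_rpow_mul_rpow {t p : ℝ} (ht : 1 ≤ t) (hp : 0 ≤ p) :
    (t + 1) ^ p ≤ 2 ^ p * t ^ p := by
  rw [← mul_rpow zero_le_two (by linarith)]
  exact rpow_le_rpow (by linarith) (by linarith) hp

/-- Example 3.1, converse direction: if `f` is entire, `m > 1`, `m' = m/(m-1)`, and
`|c_n| ≤ exp(-C'·n^{m'})` for all `n ≥ 0` with some `C' > 0`, then there is a
constant `C > 0` such that `log M_f(r) ≤ C·(log r)^m` for all `r ≥ e`. -/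
theorem logpower_growth_from_coefficient_decay
    (f : ℂ → ℂ) (c : ℕ → ℂ)
    (hf : ∀ z : ℂ, HasSum (fun n : ℕ => c n * z ^ n) (f z))
    (C' m : ℝ) (hC' : 0 < C') (hm : 1 < m)
    (hc : ∀ n : ℕ, ‖c n‖ ≤ Real.exp (-(C' * (n : ℝ) ^ (m / (m - 1))))) :
    ∃ C : ℝ, 0 < C ∧ ∀ r : ℝ, Real.exp 1 ≤ r →
      Real.log (sSup {x : ℝ | ∃ z : ℂ, ‖z‖ = r ∧ x = ‖f z‖})
        ≤ C * Real.log r ^ m := by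
  obtain ⟨K, hK, hyoung⟩ :=
    (Real.HolderConjugate.conjExponent hm).exists_forall_mul_le_mul_rpow_add_mul_rpow hC'
  refine ⟨K * 2 ^ m + 1, by positivity, fun r hr => ?_⟩
  have hr0 : 0 < r := (exp_pos 1).trans_le hr
  have ht : 1 ≤ log r := by rwa [le_log_iff_exp_le hr0]
  have hbound : ∀ z : ℂ, ‖z‖ = r → ‖f z‖ ≤ exp (K * (log r + 1) ^ m + 1) := by
    rintro z rfl
    exact norm_le_exp_add_one_of_hasSum (hf z) fun n =>
      mul_pow_le_exp_mul_exp_neg_one_pow (hc n) hr0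
        (hyoung n _ n.cast_nonneg (by linarith))
  have hpow := add_one_rpow_le_two_rpow_mul_rpow ht (by linarith : 0 ≤ m)
  have hone : 1 ≤ log r ^ m := one_le_rpow ht (by linarith)
  calc log (sSup {x : ℝ | ∃ z : ℂ, ‖z‖ = r ∧ x = ‖f z‖})
      ≤ K * (log r + 1) ^ m + 1 := log_sSup_norm_sphere_le hr0.le (by positivity) hbound
    _ ≤ (K * 2 ^ m + 1) * log r ^ m := by nlinarith
end

section
/- Let d ≥ 1 and let c : (Fin d → ℕ) → ℂ be a family of coefficients such that for every z ∈ ℂ^d the family (c_k · Π_{j} z_j^{k_j})_{k ∈ ℕ^d} is summable, with sum f(z). For r ∈ (0,∞)^d let M_f(r) := sup { |f(z)| : |z_j| = r_j for all j }. Let Λ : ℝ^d → ℝ satisfy M_f(r) ≤ exp(Λ(log r₁, …, log r_d)) for all r ∈ (0,∞)^d. Then for every multi-index k ∈ ℕ^d and every v ∈ ℝ^d one has |c_k| ≤ exp(Λ(v) − ⟨k, v⟩); consequently, whenever Λ*(k) := sup_{v ∈ ℝ^d} (⟨k, v⟩ − Λ(v)) is finite, |c_k| ≤ exp(−Λ*(k)).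 -/
/-!
On the torus `|z_j| = r_j`, parametrised by `z_j = r_j e(t_j)`, the function `f` becomes the
absolutely convergent Fourier series `∑ c_m r^m e(⟨m, t⟩)` on the unit torus. Its `k`-th Fourier
coefficient is therefore `c_k r^k`, and being an average of `f` over the torus it is bounded by
`M_f(r) ≤ exp Λ(log r)`. Taking `r = exp v` gives `|c_k| ≤ exp (Λ v - ⟨k, v⟩)`; optimising over
`v` gives the bound by the conjugate.
-/

open MeasureTheory Finset Set Real

-- `mFourierCoeff` integrates against the Haar probability measure, which Mathlib only makes an
-- instance locally.
attribute [local instance] instMeasureSpaceUnitAddCircle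
  instIsProbabilityMeasureUnitAddCircleVolume

lemma fourier_one_pow {T : ℝ} (x : AddCircle T) (n : ℕ) : fourier 1 x ^ n = fourier n x := by
  rw [fourier_one, fourier_apply, natCast_zsmul, AddCircle.toCircle_nsmul, Circle.coe_pow]

namespace UnitAddTorus

variable {d : Type*} [Fintype d]

lemma norm_mFourier_apply (n : d → ℤ) (t : UnitAddTorus d) : ‖mFourier n t‖ = 1 := by
  simp [mFourier, fourier_apply, norm_prod, Circle.norm_coe]

lemma mFourierCoeff_mFourier (m n : d → ℤ) :
    mFourierCoeff (mFourier n) m = if m = n then 1 else 0 := by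
  rw [← orthonormal_iff_ite.mp orthonormal_mFourier m n, ContinuousMap.inner_toLp]
  simp [mFourierCoeff, mFourier_neg, mul_comm]

lemma norm_mFourierCoeff_le {E : Type*} [NormedAddCommGroup E] [NormedSpace ℂ E]
    {f : UnitAddTorus d → E} {C : ℝ} (hf : ∀ t, ‖f t‖ ≤ C) (n : d → ℤ) :
    ‖mFourierCoeff f n‖ ≤ C := by
  have hbound : ∀ t, ‖mFourier (-n) t • f t‖ ≤ C := fun t => by
    rw [norm_smul, norm_mFourier_apply, one_mul]
    exact hf t
  have := norm_integral_le_of_norm_le_const (μ := volume) (Filter.Eventually.of_forall hbound)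
  simp only [probReal_univ, mul_one] at this
  exact this

lemma mFourierCoeff_eq_of_hasSum {ι : Type*} [Countable ι] {a : ι → ℂ} {e : ι → d → ℤ}
    (he : Function.Injective e) (ha : Summable fun i => ‖a i‖) {f : UnitAddTorus d → ℂ}
    (hf : ∀ t, HasSum (fun i => a i • mFourier (e i) t) (f t)) (i : ι) :
    mFourierCoeff f (e i) = a i := by
  set F : ι → UnitAddTorus d → ℂ := fun j t => a j • (mFourier (-e i) t • mFourier (e j) t)
  have hF_int : ∀ j, Integrable (F j) := fun j =>
    ((mFourier (-e i) * mFourier (e j)).continuous.const_smul (a j)).integrable_of_hasCompactSupport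
      (HasCompactSupport.of_compactSpace _)
  have hF_norm : ∀ j, ∫ t, ‖F j t‖ = ‖a j‖ := fun j => by
    simp [F, norm_mFourier_apply]
  have hsum := hasSum_integral_of_summable_integral_norm hF_int (by simpa only [hF_norm] using ha)
  have hlim : ∫ t, ∑' j, F j t = mFourierCoeff f (e i) := by
    refine integral_congr_ae (Filter.Eventually.of_forall fun t => ?_)
    simp only [F, smul_comm (a _)]
    exact ((hf t).const_smul _).tsum_eq
  have hterm : ∀ j, ∫ t, F j t = a j • if e i = e j then 1 else 0 := fun j => by
    rw [integral_smul, ← mFourierCoeff_mFourier]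
    rfl
  rw [hlim] at hsum
  refine (hsum.unique (hasSum_single i fun j hj => ?_)).trans ?_
  · simp [hterm, he.ne hj.symm]
  · simp [hterm]

end UnitAddTorus

section MultiPowerSeries

open UnitAddTorus

variable {ι : Type*} [Fintype ι]

lemma norm_le_tsum_norm_mul_prod_pow {c : (ι → ℕ) → ℂ} {z : ι → ℂ} {w : ℂ}
    (hf : HasSum (fun k => c k * ∏ j, z j ^ k j) w) :
    ‖w‖ ≤ ∑' k, ‖c k‖ * ∏ j, ‖z j‖ ^ k j := by
  simpa [norm_prod] using
    hf.norm_le_of_bounded (summable_norm_iff.2 hf.summable).hasSum fun _ => le_rfl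

theorem norm_coeff_mul_prod_pow_le {c : (ι → ℕ) → ℂ} {f : (ι → ℂ) → ℂ} {r : ι → ℝ} {M : ℝ}
    (hr : ∀ j, 0 ≤ r j)
    (hf : ∀ z : ι → ℂ, (∀ j, ‖z j‖ = r j) → HasSum (fun k => c k * ∏ j, z j ^ k j) (f z))
    (hM : ∀ z : ι → ℂ, (∀ j, ‖z j‖ = r j) → ‖f z‖ ≤ M) (k : ι → ℕ) :
    ‖c k‖ * ∏ j, r j ^ k j ≤ M := by
  set z : UnitAddTorus ι → ι → ℂ := fun t j => r j * fourier 1 (t j)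
  set b : (ι → ℕ) → ℂ := fun m => c m * ∏ j, (r j : ℂ) ^ m j
  have hz : ∀ t j, ‖z t j‖ = r j := fun t j => by simp [z, Circle.norm_coe, abs_of_nonneg (hr j)]
  have hb : Summable fun m => ‖b m‖ :=
    summable_norm_iff.2 (hf (fun j => r j) fun j => by simp [abs_of_nonneg (hr j)]).summable
  have hmonomial : ∀ t m, c m * ∏ j, z t j ^ m j = b m • mFourier (fun j => (m j : ℤ)) t :=
    fun t m => by
      simp only [b, z, mFourier, ContinuousMap.coe_mk, smul_eq_mul, mul_pow, prod_mul_distrib,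
        fourier_one_pow, mul_assoc]
  have hfz : ∀ t, HasSum (fun m => b m • mFourier (fun j => (m j : ℤ)) t) (f (z t)) := fun t => by
    simpa only [hmonomial] using hf _ (hz t)
  have he : Function.Injective fun (m : ι → ℕ) (j : ι) => (m j : ℤ) :=
    fun _ _ h => funext fun j => Int.ofNat_inj.1 (congrFun h j)
  calc ‖c k‖ * ∏ j, r j ^ k j = ‖b k‖ := by simp [b, norm_prod, abs_of_nonneg (hr _)]
    _ = ‖mFourierCoeff (fun t => f (z t)) (fun j => (k j : ℤ))‖ := by
      rw [mFourierCoeff_eq_of_hasSum he hb hfz]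
    _ ≤ M := norm_mFourierCoeff_le (fun t => hM _ (hz t)) _

end MultiPowerSeries

lemma le_exp_neg_sSup_range {α : Type*} [Nonempty α] {φ : α → ℝ} {a : ℝ}
    (h : ∀ i, a ≤ exp (-φ i)) : a ≤ exp (-sSup (range φ)) := by
  rcases le_or_gt a 0 with ha | ha
  · exact ha.trans (exp_pos _).le
  have hsup : sSup (range φ) ≤ -log a :=
    csSup_le (range_nonempty φ) <| forall_mem_range.2 fun i => by
      linarith [(log_le_iff_le_exp ha).2 (h i)]
  calc a = exp (log a) := (exp_log ha).symm
    _ ≤ exp (-sSup (range φ)) := exp_le_exp.2 (by linarith)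

theorem multivariate_coefficient_upper_estimate_general
    (d : ℕ)
    (c : (Fin d → ℕ) → ℂ) (f : (Fin d → ℂ) → ℂ)
    (hf : ∀ z : Fin d → ℂ,
      HasSum (fun k : Fin d → ℕ => c k * ∏ j : Fin d, z j ^ k j) (f z))
    (Λ : (Fin d → ℝ) → ℝ)
    (hM : ∀ r : Fin d → ℝ, (∀ j, 0 < r j) →
      sSup {x : ℝ | ∃ z : Fin d → ℂ,
          (∀ j, ‖z j‖ = r j) ∧ x = ‖f z‖}
        ≤ Real.exp (Λ fun j => Real.log (r j))) :
    (∀ (k : Fin d → ℕ) (v : Fin d → ℝ),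
      ‖c k‖ ≤ Real.exp (Λ v - ∑ j : Fin d, (k j : ℝ) * v j)) ∧
    (∀ k : Fin d → ℕ,
      BddAbove (Set.range fun v : Fin d → ℝ => (∑ j : Fin d, (k j : ℝ) * v j) - Λ v) →
      ‖c k‖
        ≤ Real.exp (-(sSup (Set.range
            fun v : Fin d → ℝ => (∑ j : Fin d, (k j : ℝ) * v j) - Λ v)))) := by
  have hcoeff : ∀ (k : Fin d → ℕ) (v : Fin d → ℝ),
      ‖c k‖ ≤ Real.exp (Λ v - ∑ j : Fin d, (k j : ℝ) * v j) := by
    intro k v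
    set r : Fin d → ℝ := fun j => exp (v j)
    have hmax : ∀ z : Fin d → ℂ, (∀ j, ‖z j‖ = r j) → ‖f z‖ ≤ exp (Λ v) := by
      intro z hz
      have hbdd : BddAbove {x : ℝ | ∃ z : Fin d → ℂ, (∀ j, ‖z j‖ = r j) ∧ x = ‖f z‖} := by
        refine ⟨∑' m, ‖c m‖ * ∏ j, r j ^ m j, ?_⟩
        rintro _ ⟨z', hz', rfl⟩
        simpa only [hz'] using norm_le_tsum_norm_mul_prod_pow (hf z')
      calc ‖f z‖ ≤ _ := le_csSup hbdd ⟨z, hz, rfl⟩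
        _ ≤ exp (Λ fun j => log (r j)) := hM r fun j => exp_pos _
        _ = exp (Λ v) := by simp only [r, log_exp]
    have := norm_coeff_mul_prod_pow_le (fun j => (exp_pos _).le) (fun z _ => hf z) hmax k
    rw [exp_sub, le_div_iff₀ (exp_pos _), exp_sum]
    simpa only [r, ← exp_nat_mul] using this
  refine ⟨hcoeff, fun k _ => le_exp_neg_sSup_range fun v => ?_⟩
  simpa only [neg_sub] using hcoeff k v

/-- Proposition 4.1 (multivariate upper estimate): let `f : ℂ^d → ℂ` be given by an
everywhere summable multi-power series with coefficients `c_k`, `k ∈ ℕ^d`, and let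
`Λ : ℝ^d → ℝ` satisfy `M_f(r) ≤ exp(Λ(log r₁, …, log r_d))` for every
`r ∈ (0,∞)^d`. Then for all `k ∈ ℕ^d` and `v ∈ ℝ^d`,
`|c_k| ≤ exp(Λ(v) - ⟨k, v⟩)`; consequently, whenever the multivariate conjugate
`Λ*(k) = sup_v (⟨k, v⟩ - Λ(v))` is finite, `|c_k| ≤ exp(-Λ*(k))`. -/
theorem multivariate_coefficient_upper_estimate
    (d : ℕ) (hd : 1 ≤ d)
    (c : (Fin d → ℕ) → ℂ) (f : (Fin d → ℂ) → ℂ)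
    (hf : ∀ z : Fin d → ℂ,
      HasSum (fun k : Fin d → ℕ => c k * ∏ j : Fin d, z j ^ k j) (f z))
    (Λ : (Fin d → ℝ) → ℝ)
    (hM : ∀ r : Fin d → ℝ, (∀ j, 0 < r j) →
      sSup {x : ℝ | ∃ z : Fin d → ℂ,
          (∀ j, ‖z j‖ = r j) ∧ x = ‖f z‖}
        ≤ Real.exp (Λ fun j => Real.log (r j))) :
    (∀ (k : Fin d → ℕ) (v : Fin d → ℝ),
      ‖c k‖ ≤ Real.exp (Λ v - ∑ j : Fin d, (k j : ℝ) * v j)) ∧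
    (∀ k : Fin d → ℕ,
      BddAbove (Set.range fun v : Fin d → ℝ => (∑ j : Fin d, (k j : ℝ) * v j) - Λ v) →
      ‖c k‖
        ≤ Real.exp (-(sSup (Set.range
            fun v : Fin d → ℝ => (∑ j : Fin d, (k j : ℝ) * v j) - Λ v)))) :=
  multivariate_coefficient_upper_estimate_general d c f hf Λ hM
end

section
/- Let d ≥ 1, let Q : (Fin d → ℕ) → ℝ, let ε ∈ (0,1), and let v ∈ ℝ^d. Define Q^∗(u) := sup_{k ∈ ℕ^d} (⟨k, u⟩ − Q(k)) and K(ε) := Σ_{k ∈ ℕ^d} exp(−ε·Q(k)). Suppose K(ε) < ∞ and Q^∗(v/(1−ε)) < ∞. Then Σ_{k ∈ ℕ^d} exp(⟨k, v⟩ − Q(k)) ≤ K(ε) · exp((1−ε)·Q^∗(v/(1−ε))). -/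
/-- Multivariate K-form of Proposition 4.2: for `Q : ℕ^d → ℝ`, `ε ∈ (0,1)`,
`v ∈ ℝ^d`, if `K(ε) = Σ_{k ∈ ℕ^d} exp(-ε·Q(k)) < ∞` and the discrete multivariate
conjugate `Q*(v/(1-ε)) = sup_{k ∈ ℕ^d} (⟨k, v/(1-ε)⟩ - Q(k))` is finite, then
`Σ_{k ∈ ℕ^d} exp(⟨k, v⟩ - Q(k)) ≤ K(ε) · exp((1-ε)·Q*(v/(1-ε)))`.
(Sums over all multi-indices, taken in the extended nonnegative reals.) -/
theorem multivariate_series_bound_K_form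
    (d : ℕ) (hd : 1 ≤ d)
    (Q : (Fin d → ℕ) → ℝ) (ε : ℝ) (v : Fin d → ℝ) (hε : ε ∈ Set.Ioo (0 : ℝ) 1)
    (hK : (∑' k : Fin d → ℕ, ENNReal.ofReal (Real.exp (-ε * Q k))) ≠ ⊤)
    (hQs : BddAbove (Set.range
      fun k : Fin d → ℕ => (∑ j : Fin d, (k j : ℝ) * (v j / (1 - ε))) - Q k)) :
    (∑' k : Fin d → ℕ, ENNReal.ofReal (Real.exp ((∑ j : Fin d, (k j : ℝ) * v j) - Q k)))
      ≤ (∑' k : Fin d → ℕ, ENNReal.ofReal (Real.exp (-ε * Q k))) *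
        ENNReal.ofReal (Real.exp ((1 - ε) *
          sSup (Set.range
            fun k : Fin d → ℕ => (∑ j : Fin d, (k j : ℝ) * (v j / (1 - ε))) - Q k))) := by
  set S := sSup (Set.range
      fun k : Fin d → ℕ => (∑ j : Fin d, (k j : ℝ) * (v j / (1 - ε))) - Q k) with hS
  have hε1 : (0:ℝ) < 1 - ε := by linarith [hε.2]
  rw [← ENNReal.tsum_mul_right]
  refine ENNReal.tsum_le_tsum fun k => ?_
  rw [← ENNReal.ofReal_mul (Real.exp_nonneg _), ← Real.exp_add]
  refine ENNReal.ofReal_le_ofReal (Real.exp_le_exp.2 ?_)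
  have hle : (∑ j : Fin d, (k j : ℝ) * (v j / (1 - ε))) - Q k ≤ S :=
    le_csSup hQs ⟨k, rfl⟩
  have key : (∑ j : Fin d, (k j : ℝ) * v j) - Q k
      = -ε * Q k + (1 - ε) * ((∑ j : Fin d, (k j : ℝ) * (v j / (1 - ε))) - Q k) := by
    have : ∀ j : Fin d, (1 - ε) * ((k j : ℝ) * (v j / (1 - ε))) = (k j : ℝ) * v j := by
      intro j; field_simp
    rw [mul_sub, Finset.mul_sum]
    simp_rw [this]
    ring
  rw [key]
  have := mul_le_mul_of_nonneg_left hle hε1.le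
  linarith
end

section
/- Let d ≥ 1 and let c : (Fin d → ℕ) → ℂ be such that for every z ∈ ℂ^d the family (c_k · Π_j z_j^{k_j})_{k ∈ ℕ^d} is summable, with sum f(z), and let M_f(r) := sup { |f(z)| : |z_j| = r_j for all j } for r ∈ (0,∞)^d. Let Q : (Fin d → ℕ) → ℝ satisfy |c_k| ≤ exp(−Q(k)) for all k ∈ ℕ^d, and suppose there exists ε₀ ∈ (0,1) with K(ε₀) := Σ_{k ∈ ℕ^d} exp(−ε₀·Q(k)) < ∞. Then for every r with r_j ≥ 1 for all j and Q^∗((log r₁, …, log r_d)/(1−ε₀)) < ∞, where Q^∗(u) := sup_{k ∈ ℕ^d} (⟨k, u⟩ − Q(k)), one has M_f(r) ≤ K(ε₀) · exp((1−ε₀) · Q^∗((log r₁, …, log r_d)/(1−ε₀))). -/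
/-!
On the polytorus `|z_j| = r_j` every term of the series is bounded by `exp (-Q k) r^k =
exp (-Q k + ⟨k, log r⟩)`. Splitting `-Q k = -ε₀ Q k - (1 - ε₀) Q k` writes the exponent as
`-ε₀ Q k + (1 - ε₀) (⟨k, log r / (1 - ε₀)⟩ - Q k) ≤ -ε₀ Q k + (1 - ε₀) Q^*(log r / (1 - ε₀))`,
and summing over `k` gives the bound.
-/

open Real Finset

variable {ι : Type*} [Fintype ι]

theorem prod_pow_eq_exp_sum_mul_log {r : ι → ℝ} (hr : ∀ j, 0 < r j) (k : ι → ℕ) :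
    ∏ j, r j ^ k j = exp (∑ j, (k j : ℝ) * log (r j)) := by
  rw [exp_sum]
  exact prod_congr rfl fun j _ => by rw [mul_comm, exp_mul, exp_log (hr j), rpow_natCast]

theorem exp_neg_mul_prod_pow_le {ε S q : ℝ} (hε : ε < 1) {r : ι → ℝ} (hr : ∀ j, 0 < r j)
    {k : ι → ℕ} (hS : ∑ j, (k j : ℝ) * (log (r j) / (1 - ε)) - q ≤ S) :
    exp (-q) * ∏ j, r j ^ k j ≤ exp (-ε * q) * exp ((1 - ε) * S) := by
  have hε' : 0 < 1 - ε := sub_pos.mpr hε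
  calc exp (-q) * ∏ j, r j ^ k j
      = exp (-ε * q + (1 - ε) * (∑ j, (k j : ℝ) * (log (r j) / (1 - ε)) - q)) := by
        rw [prod_pow_eq_exp_sum_mul_log hr, ← exp_add, mul_sub, mul_sum]
        congr 1
        simp only [mul_div_assoc', mul_div_cancel_left₀ _ hε'.ne']
        ring
    _ ≤ exp (-ε * q + (1 - ε) * S) := by gcongr
    _ = exp (-ε * q) * exp ((1 - ε) * S) := exp_add _ _

theorem norm_le_of_hasSum_of_norm_coeff_le {c : (ι → ℕ) → ℂ} {z : ι → ℂ} {F : ℂ}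
    (hF : HasSum (fun k => c k * ∏ j, z j ^ k j) F) {Q : (ι → ℕ) → ℝ}
    (hc : ∀ k, ‖c k‖ ≤ exp (-Q k)) {ε : ℝ} (hε : ε < 1)
    (hK : Summable fun k => exp (-ε * Q k)) {r : ι → ℝ} (hz : ∀ j, ‖z j‖ = r j)
    (hr : ∀ j, 0 < r j)
    (hB : BddAbove (Set.range fun k : ι → ℕ =>
      ∑ j, (k j : ℝ) * (log (r j) / (1 - ε)) - Q k)) :
    ‖F‖ ≤ (∑' k, exp (-ε * Q k)) * exp ((1 - ε) * sSup (Set.range fun k : ι → ℕ =>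
      ∑ j, (k j : ℝ) * (log (r j) / (1 - ε)) - Q k)) := by
  refine hF.norm_le_of_bounded (hK.hasSum.mul_right _) fun k => ?_
  calc ‖c k * ∏ j, z j ^ k j‖ = ‖c k‖ * ∏ j, r j ^ k j := by
        simp only [norm_mul, norm_prod, norm_pow, hz]
    _ ≤ exp (-Q k) * ∏ j, r j ^ k j :=
        mul_le_mul_of_nonneg_right (hc k) (prod_nonneg fun j _ => pow_nonneg (hr j).le _)
    _ ≤ _ := exp_neg_mul_prod_pow_le hε hr (le_csSup hB ⟨k, rfl⟩)

theorem multivariate_maximal_function_upper_estimate_general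
    (d : ℕ)
    (c : (Fin d → ℕ) → ℂ) (f : (Fin d → ℂ) → ℂ)
    (hf : ∀ z : Fin d → ℂ,
      HasSum (fun k : Fin d → ℕ => c k * ∏ j : Fin d, z j ^ k j) (f z))
    (Q : (Fin d → ℕ) → ℝ)
    (hc : ∀ k : Fin d → ℕ, ‖c k‖ ≤ Real.exp (-Q k))
    (ε₀ : ℝ) (hε₀ : ε₀ ∈ Set.Ioo (0 : ℝ) 1)
    (hK : Summable fun k : Fin d → ℕ => Real.exp (-ε₀ * Q k)) :
    ∀ r : Fin d → ℝ, (∀ j, 1 ≤ r j) →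
      BddAbove (Set.range
        fun k : Fin d → ℕ => (∑ j : Fin d, (k j : ℝ) * (Real.log (r j) / (1 - ε₀))) - Q k) →
      sSup {x : ℝ | ∃ z : Fin d → ℂ,
          (∀ j, ‖z j‖ = r j) ∧ x = ‖f z‖}
        ≤ (∑' k : Fin d → ℕ, Real.exp (-ε₀ * Q k)) *
          Real.exp ((1 - ε₀) *
            sSup (Set.range
              fun k : Fin d → ℕ =>
                (∑ j : Fin d, (k j : ℝ) * (Real.log (r j) / (1 - ε₀))) - Q k)) := by
  intro r hr hB
  have hr₀ : ∀ j, 0 < r j := fun j => one_pos.trans_le (hr j)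
  refine Real.sSup_le ?_ (mul_nonneg (tsum_nonneg fun _ => (exp_pos _).le) (exp_pos _).le)
  rintro _ ⟨z, hz, rfl⟩
  exact norm_le_of_hasSum_of_norm_coeff_le (hf z) hc hε₀.2 hK hz hr₀ hB

/-- Proposition 4.3 (multivariate lower estimate): let `f : ℂ^d → ℂ` be given by an
everywhere summable multi-power series with coefficients `c_k` satisfying
`|c_k| ≤ exp(-Q(k))` for all `k ∈ ℕ^d`, and suppose
`K(ε₀) = Σ_{k ∈ ℕ^d} exp(-ε₀·Q(k)) < ∞` for some `ε₀ ∈ (0,1)`. Then for every `r`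
with `r_j ≥ 1` for all `j` such that the discrete multivariate conjugate
`Q*((log r)/(1-ε₀)) = sup_{k} (⟨k, (log r)/(1-ε₀)⟩ - Q(k))` is finite,
`M_f(r) ≤ K(ε₀) · exp((1-ε₀)·Q*((log r)/(1-ε₀)))`. -/
theorem multivariate_maximal_function_upper_estimate
    (d : ℕ) (hd : 1 ≤ d)
    (c : (Fin d → ℕ) → ℂ) (f : (Fin d → ℂ) → ℂ)
    (hf : ∀ z : Fin d → ℂ,
      HasSum (fun k : Fin d → ℕ => c k * ∏ j : Fin d, z j ^ k j) (f z))
    (Q : (Fin d → ℕ) → ℝ)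
    (hc : ∀ k : Fin d → ℕ, ‖c k‖ ≤ Real.exp (-Q k))
    (ε₀ : ℝ) (hε₀ : ε₀ ∈ Set.Ioo (0 : ℝ) 1)
    (hK : Summable fun k : Fin d → ℕ => Real.exp (-ε₀ * Q k)) :
    ∀ r : Fin d → ℝ, (∀ j, 1 ≤ r j) →
      BddAbove (Set.range
        fun k : Fin d → ℕ => (∑ j : Fin d, (k j : ℝ) * (Real.log (r j) / (1 - ε₀))) - Q k) →
      sSup {x : ℝ | ∃ z : Fin d → ℂ,
          (∀ j, ‖z j‖ = r j) ∧ x = ‖f z‖}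
        ≤ (∑' k : Fin d → ℕ, Real.exp (-ε₀ * Q k)) *
          Real.exp ((1 - ε₀) *
            sSup (Set.range
              fun k : Fin d → ℕ =>
                (∑ j : Fin d, (k j : ℝ) * (Real.log (r j) / (1 - ε₀))) - Q k)) :=
  multivariate_maximal_function_upper_estimate_general d c f hf Q hc ε₀ hε₀ hK
end
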